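/- arXiv:2510.13096 — 9 statements merged into one kernel-verified Lean document; each statement's English description precedes it below -/
import Mathlib

section
/- Let E be a real Banach space, let U, Ξ, F, S : ℝ → E be continuously differentiable functions with derivatives U', Ξ', F', S', and let L > 0, Δt > 0, a ∈ ℝ. Define g : ℝ → E by g(t) = (L/2)·[(U(t) − U(t−Δt)) + (Ξ(t) − Ξ(t−Δt))] + (1/2)·[(F(t) − F(t−Δt)) + (S(t) − S(t−Δt))]. Then ∫_{a}^{a+Δt} ‖g(t)‖² dt ≤ (Δt)² · ∫_{a−Δt}^{a+Δt} ( L²‖U'(s)‖² + L²‖Ξ'(s)‖² + ‖F'(s)‖² + ‖S'(s)‖² ) ds. -/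
/-!
With `W = L • U + L • Ξ + F + S` one has `g t = ½ (W t - W (t - Δt))`, so the
displacement bound `‖W t - W (t - Δt)‖ ≤ ∫ ‖W'‖` and Cauchy–Schwarz give
`‖g t‖² ≤ (Δt / 4) ∫_{t-Δt}^t ‖W'‖²`, and `‖W'‖² ≤ 4 φ` for the integrand `φ` of the right-hand
side, by `(x + y + z + w)² ≤ 4 (x² + y² + z² + w²)`.
For `t ∈ [a, a + Δt]` the window `[t - Δt, t]` lies in `[a - Δt, a + Δt]`, so integrating the
pointwise bound over `[a, a + Δt]` costs one more factor `Δt`.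
-/

open MeasureTheory Set

theorem sq_intervalIntegral_le_mul_integral_sq {f : ℝ → ℝ} {a b : ℝ} (hab : a ≤ b)
    (hf : IntervalIntegrable f volume a b)
    (hf2 : IntervalIntegrable (fun x => f x ^ 2) volume a b) :
    (∫ x in a..b, f x) ^ 2 ≤ (b - a) * ∫ x in a..b, f x ^ 2 := by
  rcases hab.eq_or_lt with rfl | hlt
  · simp
  set I := ∫ x in a..b, f x
  have hvar : 0 ≤ ∫ x in a..b, ((b - a) * f x - I) ^ 2 :=
    intervalIntegral.integral_nonneg hab fun x _ => sq_nonneg _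
  have hexpand : (∫ x in a..b, ((b - a) * f x - I) ^ 2)
      = (b - a) * ((b - a) * ∫ x in a..b, f x ^ 2) - (b - a) * I ^ 2 := by
    have hpoly : ∀ x, ((b - a) * f x - I) ^ 2
        = (b - a) ^ 2 * f x ^ 2 - (2 * (b - a) * I) * f x + I ^ 2 := fun x => by ring
    simp_rw [hpoly]
    rw [intervalIntegral.integral_add ((hf2.const_mul _).sub (hf.const_mul _))
        intervalIntegrable_const,
      intervalIntegral.integral_sub (hf2.const_mul _) (hf.const_mul _),
      intervalIntegral.integral_const_mul, intervalIntegral.integral_const_mul,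
      intervalIntegral.integral_const, smul_eq_mul]
    ring
  nlinarith [sub_pos.2 hlt]

theorem norm_sub_sq_le_mul_integral_norm_deriv_sq {E : Type*} [NormedAddCommGroup E]
    [NormedSpace ℝ E] {f f' : ℝ → E} {a b : ℝ} (hab : a ≤ b)
    (hf : ∀ t ∈ Icc a b, HasDerivAt f (f' t) t) (hf' : ContinuousOn f' (Icc a b)) :
    ‖f b - f a‖ ^ 2 ≤ (b - a) * ∫ t in a..b, ‖f' t‖ ^ 2 := by
  have hnorm : IntervalIntegrable (fun t => ‖f' t‖) volume a b :=
    hf'.norm.intervalIntegrable_of_Icc hab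
  have hdispl : ‖f b - f a‖ ≤ ∫ t in a..b, ‖f' t‖ :=
    norm_sub_le_integral_of_norm_deriv_le_of_le hab
      (fun t ht => (hf t ht).continuousAt.continuousWithinAt)
      (fun t ht => (hf t (Ioo_subset_Icc_self ht)).differentiableAt.differentiableWithinAt)
      (.of_forall fun t ht => by rw [(hf t (Ioo_subset_Icc_self ht)).deriv])
      hnorm
  calc ‖f b - f a‖ ^ 2 ≤ (∫ t in a..b, ‖f' t‖) ^ 2 := by gcongr
    _ ≤ (b - a) * ∫ t in a..b, ‖f' t‖ ^ 2 :=
      sq_intervalIntegral_le_mul_integral_sq hab hnorm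
        ((hf'.norm.pow 2).intervalIntegrable_of_Icc hab)

theorem norm_add_add_add_sq_le {E : Type*} [SeminormedAddCommGroup E] (x y z w : E) :
    ‖x + y + z + w‖ ^ 2 ≤ 4 * (‖x‖ ^ 2 + ‖y‖ ^ 2 + ‖z‖ ^ 2 + ‖w‖ ^ 2) := by
  have := norm_add₄_le (a := x) (b := y) (c := z) (d := w)
  nlinarith [norm_nonneg (x + y + z + w), sq_nonneg (‖x‖ - ‖y‖), sq_nonneg (‖x‖ - ‖z‖),
    sq_nonneg (‖x‖ - ‖w‖), sq_nonneg (‖y‖ - ‖z‖), sq_nonneg (‖y‖ - ‖w‖), sq_nonneg (‖z‖ - ‖w‖)]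

theorem integral_le_mul_integral_of_abs_le_window_integral {u φ : ℝ → ℝ} {C δ a : ℝ}
    (hC : 0 ≤ C) (hδ : 0 ≤ δ) (hφ : ∀ s, 0 ≤ φ s)
    (hφi : IntervalIntegrable φ volume (a - δ) (a + δ))
    (hu : ∀ t ∈ Icc a (a + δ), |u t| ≤ C * ∫ s in (t - δ)..t, φ s) :
    ∫ t in a..(a + δ), u t ≤ C * δ * ∫ s in (a - δ)..(a + δ), φ s := by
  have hwindow : ∀ t ∈ Icc a (a + δ), |u t| ≤ C * ∫ s in (a - δ)..(a + δ), φ s := by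
    intro t ht
    refine (hu t ht).trans (mul_le_mul_of_nonneg_left ?_ hC)
    exact intervalIntegral.integral_mono_interval (by linarith [ht.1]) (by linarith)
      (by linarith [ht.2]) (.of_forall hφ) hφi
  -- a constant bound on `‖∫ u‖` needs no integrability of `u`
  calc ∫ t in a..(a + δ), u t ≤ ‖∫ t in a..(a + δ), u t‖ := Real.le_norm_self _
    _ ≤ C * (∫ s in (a - δ)..(a + δ), φ s) * |a + δ - a| :=
      intervalIntegral.norm_integral_le_of_norm_le_const fun t ht =>
        hwindow t (Ioc_subset_Icc_self (by rwa [uIoc_of_le (by linarith)] at ht))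
    _ = C * δ * ∫ s in (a - δ)..(a + δ), φ s := by
      rw [add_sub_cancel_left, abs_of_nonneg hδ]; ring

theorem stmt3_general {E : Type*} [NormedAddCommGroup E] [NormedSpace ℝ E]
    (U Ξ F S U' Ξ' F' S' : ℝ → E)
    (hU : ∀ t, HasDerivAt U (U' t) t) (hU' : Continuous U')
    (hΞ : ∀ t, HasDerivAt Ξ (Ξ' t) t) (hΞ' : Continuous Ξ')
    (hF : ∀ t, HasDerivAt F (F' t) t) (hF' : Continuous F')
    (hS : ∀ t, HasDerivAt S (S' t) t) (hS' : Continuous S')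
    (L Δt a : ℝ) (hΔt : 0 < Δt)
    (g : ℝ → E)
    (hg : ∀ t, g t = (L / 2) • ((U t - U (t - Δt)) + (Ξ t - Ξ (t - Δt)))
        + ((1 : ℝ) / 2) • ((F t - F (t - Δt)) + (S t - S (t - Δt)))) :
    (∫ t in a..(a + Δt), ‖g t‖ ^ 2) ≤
      Δt ^ 2 * ∫ s in (a - Δt)..(a + Δt),
        (L ^ 2 * ‖U' s‖ ^ 2 + L ^ 2 * ‖Ξ' s‖ ^ 2 + ‖F' s‖ ^ 2 + ‖S' s‖ ^ 2) := by
  set W : ℝ → E := fun t => L • U t + L • Ξ t + F t + S t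
  set W' : ℝ → E := fun t => L • U' t + L • Ξ' t + F' t + S' t
  set φ : ℝ → ℝ := fun s =>
    L ^ 2 * ‖U' s‖ ^ 2 + L ^ 2 * ‖Ξ' s‖ ^ 2 + ‖F' s‖ ^ 2 + ‖S' s‖ ^ 2
  have hW : ∀ t, HasDerivAt W (W' t) t := fun t =>
    ((((hU t).const_smul L).add ((hΞ t).const_smul L)).add (hF t)).add (hS t)
  have hW'φ : ∀ s, ‖W' s‖ ^ 2 ≤ 4 * φ s := fun s => by
    simpa only [norm_smul, mul_pow, Real.norm_eq_abs, sq_abs] using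
      norm_add_add_add_sq_le (L • U' s) (L • Ξ' s) (F' s) (S' s)
  have hφ : Continuous φ := by fun_prop
  rw [sq]
  refine integral_le_mul_integral_of_abs_le_window_integral hΔt.le hΔt.le (fun s => by positivity)
    (hφ.intervalIntegrable _ _) fun t _ => ?_
  have hgW : g t = (2 : ℝ)⁻¹ • (W t - W (t - Δt)) := by rw [hg]; module
  calc |‖g t‖ ^ 2| = ‖W t - W (t - Δt)‖ ^ 2 / 4 := by
        rw [abs_of_nonneg (by positivity), hgW, norm_smul]; norm_num; ring
    _ ≤ Δt * (∫ s in (t - Δt)..t, ‖W' s‖ ^ 2) / 4 := by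
        gcongr
        simpa using norm_sub_sq_le_mul_integral_norm_deriv_sq (a := t - Δt) (b := t)
          (by linarith) (fun s _ => hW s) (by fun_prop : Continuous W').continuousOn
    _ ≤ Δt * (∫ s in (t - Δt)..t, 4 * φ s) / 4 := by
        gcongr
        exact intervalIntegral.integral_mono_on (by linarith)
          ((by fun_prop : Continuous fun s => ‖W' s‖ ^ 2).intervalIntegrable _ _)
          ((hφ.const_mul 4).intervalIntegrable _ _) fun s _ => hW'φ s
    _ = Δt * ∫ s in (t - Δt)..t, φ s := by rw [intervalIntegral.integral_const_mul]; ring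

/-- Combined estimate of Lemma 4.1 for the interface consistency defect
`g(t) = (L/2)·[(U(t)−U(t−Δt)) + (Ξ(t)−Ξ(t−Δt))] + (1/2)·[(F(t)−F(t−Δt)) + (S(t)−S(t−Δt))]`:
`∫_{a}^{a+Δt} ‖g‖² ≤ (Δt)² ∫_{a−Δt}^{a+Δt} (L²‖U'‖² + L²‖Ξ'‖² + ‖F'‖² + ‖S'‖²)`. -/
theorem stmt3 {E : Type*} [NormedAddCommGroup E] [NormedSpace ℝ E] [CompleteSpace E]
    (U Ξ F S U' Ξ' F' S' : ℝ → E)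
    (hU : ∀ t, HasDerivAt U (U' t) t) (hU' : Continuous U')
    (hΞ : ∀ t, HasDerivAt Ξ (Ξ' t) t) (hΞ' : Continuous Ξ')
    (hF : ∀ t, HasDerivAt F (F' t) t) (hF' : Continuous F')
    (hS : ∀ t, HasDerivAt S (S' t) t) (hS' : Continuous S')
    (L Δt a : ℝ) (hL : 0 < L) (hΔt : 0 < Δt)
    (g : ℝ → E)
    (hg : ∀ t, g t = (L / 2) • ((U t - U (t - Δt)) + (Ξ t - Ξ (t - Δt)))
        + ((1 : ℝ) / 2) • ((F t - F (t - Δt)) + (S t - S (t - Δt)))) :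
    (∫ t in a..(a + Δt), ‖g t‖ ^ 2) ≤
      Δt ^ 2 * ∫ s in (a - Δt)..(a + Δt),
        (L ^ 2 * ‖U' s‖ ^ 2 + L ^ 2 * ‖Ξ' s‖ ^ 2 + ‖F' s‖ ^ 2 + ‖S' s‖ ^ 2) :=
  stmt3_general U Ξ F S U' Ξ' F' S' hU hU' hΞ hΞ' hF hF' hS hS' L Δt a hΔt g hg
end

section
/- Let H be a real inner product space, let L > 0, and let e_u, e_ξ, f, s, e_u', e_ξ', f', s', g₁, g₂ ∈ H satisfy the two Robin error relations L·e_u' + f' = (L/2)(e_u + e_ξ) + (1/2)(f + s) + g₁ and L·e_ξ' − s' = (L/2)(e_u + e_ξ) − (1/2)(f + s) + g₂. Then the interface error term satisfies the exact identity ⟨f', e_u'⟩ − ⟨s', e_ξ'⟩ = (L/2)·( ‖(e_u + e_ξ)/2 + g₁/L‖² + ‖(e_u + e_ξ)/2 + g₂/L‖² − ‖e_u'‖² − ‖e_ξ'‖² ) + (1/(4L))·‖f + s‖² − (1/(2L))·( ‖f'‖² + ‖s'‖² ) + (1/(2L))·⟨f + s, g₁ − g₂⟩. -/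
open scoped RealInnerProductSpace

/-- Exact evaluation of the interface error term `J = P₁ + P₂ + P₃` in the proof of
Theorem 4.1, obtained via the polarization identity from the two Robin error relations. -/
theorem stmt4 {H : Type*} [NormedAddCommGroup H] [InnerProductSpace ℝ H]
    (L : ℝ) (hL : 0 < L)
    (eu eξ f s eu' eξ' f' s' g₁ g₂ : H)
    (h1 : L • eu' + f' = (L / 2) • (eu + eξ) + ((1 : ℝ) / 2) • (f + s) + g₁)
    (h2 : L • eξ' - s' = (L / 2) • (eu + eξ) - ((1 : ℝ) / 2) • (f + s) + g₂) :
    ⟪f', eu'⟫ - ⟪s', eξ'⟫ =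
      (L / 2) * (‖((1 : ℝ) / 2) • (eu + eξ) + L⁻¹ • g₁‖ ^ 2
        + ‖((1 : ℝ) / 2) • (eu + eξ) + L⁻¹ • g₂‖ ^ 2
        - ‖eu'‖ ^ 2 - ‖eξ'‖ ^ 2)
      + (1 / (4 * L)) * ‖f + s‖ ^ 2
      - (1 / (2 * L)) * (‖f'‖ ^ 2 + ‖s'‖ ^ 2)
      + (1 / (2 * L)) * ⟪f + s, g₁ - g₂⟫ := by
  have hf' : f' = (L / 2) • (eu + eξ) + ((1 : ℝ) / 2) • (f + s) + g₁ - L • eu' := by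
    rw [← h1]; abel
  have hs' : s' = L • eξ' - ((L / 2) • (eu + eξ) - ((1 : ℝ) / 2) • (f + s) + g₂) := by
    rw [← h2]; abel
  subst hf' hs'
  set a := eu + eξ
  set b := f + s
  have hL0 : L ≠ 0 := hL.ne'
  simp only [← real_inner_self_eq_norm_sq, inner_add_left, inner_add_right,
    inner_sub_left, inner_sub_right, real_inner_smul_left, real_inner_smul_right,
    real_inner_comm a eu', real_inner_comm a eξ', real_inner_comm a g₁,
    real_inner_comm a g₂, real_inner_comm a b, real_inner_comm b eu',
    real_inner_comm b eξ', real_inner_comm b g₁, real_inner_comm b g₂,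
    real_inner_comm g₁ eu', real_inner_comm g₂ eξ', real_inner_comm g₁ g₂,
    real_inner_comm g₂ eu', real_inner_comm g₁ eξ', real_inner_comm eu' eξ']
  field_simp
  ring
end

section
/- Let H be a real inner product space, let L > 0 and δ > 0, and let e_u, e_ξ, f, s, e_u', e_ξ', f', s', g₁, g₂ ∈ H satisfy the two Robin error relations L·e_u' + f' = (L/2)(e_u + e_ξ) + (1/2)(f + s) + g₁ and L·e_ξ' − s' = (L/2)(e_u + e_ξ) − (1/2)(f + s) + g₂. Then ⟨f', e_u'⟩ − ⟨s', e_ξ'⟩ ≤ (L/2)·[ (1+δ)(‖e_u‖² + ‖e_ξ‖²) − ‖e_u'‖² − ‖e_ξ'‖² ] + (1/(2L))·[ (1+δ)(‖f‖² + ‖s‖²) − ‖f'‖² − ‖s'‖² ] + ((δ+5)/(2δL))·( ‖g₁‖² + ‖g₂‖² ). -/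
open scoped RealInnerProductSpace

/-! The squared norms of the two left-hand sides of the Robin relations produce
`2L⟪f', e_u'⟫` and `-2L⟪s', e_ξ'⟫` together with the new-time-step norms. On the right-hand
sides, Young's inequality separates the defects `g₁, g₂`, and the parallelogram law turns the two
old-time-step combinations `(L/2)(e_u + e_ξ) ± (1/2)(f + s)` into `(L²/2)‖e_u + e_ξ‖² + (1/2)‖f + s‖²`. -/

theorem norm_add_sq_le_one_add_mul {E : Type*} [SeminormedAddCommGroup E] {δ : ℝ} (hδ : 0 < δ)
    (x y : E) : ‖x + y‖ ^ 2 ≤ (1 + δ) * ‖x‖ ^ 2 + (1 + δ⁻¹) * ‖y‖ ^ 2 := by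
  have hyoung : 2 * ‖x‖ * ‖y‖ ≤ δ * ‖x‖ ^ 2 + δ⁻¹ * ‖y‖ ^ 2 := by
    have hsq : 0 ≤ δ⁻¹ * (δ * ‖x‖ - ‖y‖) ^ 2 := by positivity
    have hexpand : δ⁻¹ * (δ * ‖x‖ - ‖y‖) ^ 2
        = δ * ‖x‖ ^ 2 + δ⁻¹ * ‖y‖ ^ 2 - 2 * ‖x‖ * ‖y‖ := by
      field_simp
      ring
    linarith
  calc ‖x + y‖ ^ 2 ≤ (‖x‖ + ‖y‖) ^ 2 := by gcongr; exact norm_add_le x y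
    _ = ‖x‖ ^ 2 + 2 * ‖x‖ * ‖y‖ + ‖y‖ ^ 2 := by ring
    _ ≤ (1 + δ) * ‖x‖ ^ 2 + (1 + δ⁻¹) * ‖y‖ ^ 2 := by linarith

theorem norm_add_sq_le_two_mul {E : Type*} [SeminormedAddCommGroup E] (x y : E) :
    ‖x + y‖ ^ 2 ≤ 2 * (‖x‖ ^ 2 + ‖y‖ ^ 2) := by
  calc ‖x + y‖ ^ 2 ≤ (1 + 1) * ‖x‖ ^ 2 + (1 + 1⁻¹) * ‖y‖ ^ 2 :=
        norm_add_sq_le_one_add_mul one_pos x y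
    _ = 2 * (‖x‖ ^ 2 + ‖y‖ ^ 2) := by norm_num; ring

section InnerProductSpace

variable {H : Type*} [NormedAddCommGroup H] [InnerProductSpace ℝ H]

theorem norm_smul_add_sq (c : ℝ) (u v : H) :
    ‖c • u + v‖ ^ 2 = c ^ 2 * ‖u‖ ^ 2 + 2 * c * ⟪v, u⟫ + ‖v‖ ^ 2 := by
  rw [norm_add_sq_real, norm_smul, mul_pow, Real.norm_eq_abs, sq_abs, real_inner_smul_left,
    real_inner_comm]
  ring

theorem two_mul_inner_le_of_smul_add_eq {δ c : ℝ} (hδ : 0 < δ) {u v w g : H}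
    (h : c • u + v = w + g) :
    2 * c * ⟪v, u⟫ ≤ (1 + δ) * ‖w‖ ^ 2 + (1 + δ⁻¹) * ‖g‖ ^ 2 - c ^ 2 * ‖u‖ ^ 2 - ‖v‖ ^ 2 := by
  have hyoung := norm_add_sq_le_one_add_mul hδ w g
  rw [← h, norm_smul_add_sq] at hyoung
  linarith

theorem norm_smul_add_sq_add_norm_smul_sub_sq (c d : ℝ) (a b : H) :
    ‖c • a + d • b‖ ^ 2 + ‖c • a - d • b‖ ^ 2 = 2 * (c ^ 2 * ‖a‖ ^ 2 + d ^ 2 * ‖b‖ ^ 2) := by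
  rw [parallelogram_law_with_norm ℝ, norm_smul, norm_smul, mul_pow, mul_pow, Real.norm_eq_abs,
    Real.norm_eq_abs, sq_abs, sq_abs]

end InnerProductSpace

/-- Per-time-step interface estimate `J ≤ Q₁ + Q₂ + Q₃` in the proof of Theorem 4.1,
obtained from the exact interface identity together with Cauchy–Schwarz and Young. -/
theorem stmt5 {H : Type*} [NormedAddCommGroup H] [InnerProductSpace ℝ H]
    (L δ : ℝ) (hL : 0 < L) (hδ : 0 < δ)
    (eu eξ f s eu' eξ' f' s' g₁ g₂ : H)
    (h1 : L • eu' + f' = (L / 2) • (eu + eξ) + ((1 : ℝ) / 2) • (f + s) + g₁)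
    (h2 : L • eξ' - s' = (L / 2) • (eu + eξ) - ((1 : ℝ) / 2) • (f + s) + g₂) :
    ⟪f', eu'⟫ - ⟪s', eξ'⟫ ≤
      (L / 2) * ((1 + δ) * (‖eu‖ ^ 2 + ‖eξ‖ ^ 2) - ‖eu'‖ ^ 2 - ‖eξ'‖ ^ 2)
      + (1 / (2 * L)) * ((1 + δ) * (‖f‖ ^ 2 + ‖s‖ ^ 2) - ‖f'‖ ^ 2 - ‖s'‖ ^ 2)
      + ((δ + 5) / (2 * δ * L)) * (‖g₁‖ ^ 2 + ‖g₂‖ ^ 2) := by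
  have hJ₁ := two_mul_inner_le_of_smul_add_eq hδ h1
  have hJ₂ := two_mul_inner_le_of_smul_add_eq hδ (sub_eq_add_neg (L • eξ') s' ▸ h2)
  rw [inner_neg_left, norm_neg] at hJ₂
  have hold : ‖(L / 2) • (eu + eξ) + ((1 : ℝ) / 2) • (f + s)‖ ^ 2
      + ‖(L / 2) • (eu + eξ) - ((1 : ℝ) / 2) • (f + s)‖ ^ 2
      ≤ L ^ 2 * (‖eu‖ ^ 2 + ‖eξ‖ ^ 2) + (‖f‖ ^ 2 + ‖s‖ ^ 2) := by
    rw [norm_smul_add_sq_add_norm_smul_sub_sq]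
    nlinarith [norm_add_sq_le_two_mul eu eξ, norm_add_sq_le_two_mul f s]
  have hdefect : 1 + δ⁻¹ ≤ (δ + 5) / δ := by
    rw [add_div, div_self hδ.ne', inv_eq_one_div]
    gcongr
    linarith
  have hcombined : 2 * L * (⟪f', eu'⟫ - ⟪s', eξ'⟫)
      ≤ L ^ 2 * ((1 + δ) * (‖eu‖ ^ 2 + ‖eξ‖ ^ 2) - ‖eu'‖ ^ 2 - ‖eξ'‖ ^ 2)
        + ((1 + δ) * (‖f‖ ^ 2 + ‖s‖ ^ 2) - ‖f'‖ ^ 2 - ‖s'‖ ^ 2)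
        + (δ + 5) / δ * (‖g₁‖ ^ 2 + ‖g₂‖ ^ 2) := by
    have hold' := mul_le_mul_of_nonneg_left hold (by positivity : 0 ≤ 1 + δ)
    have hdefect' := mul_le_mul_of_nonneg_right hdefect (by positivity : 0 ≤ ‖g₁‖ ^ 2 + ‖g₂‖ ^ 2)
    linarith
  calc ⟪f', eu'⟫ - ⟪s', eξ'⟫ = 2 * L * (⟪f', eu'⟫ - ⟪s', eξ'⟫) / (2 * L) := by field_simp
    _ ≤ _ / (2 * L) := div_le_div_of_nonneg_right hcombined (by positivity)
    _ = _ := by field_simp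
end

section
/- Let N ≥ 1 be a natural number and let E, T, S, G : ℕ → ℝ be sequences of nonnegative real numbers with E(0) = 0 and S(0) = 0, satisfying for all n with 0 ≤ n ≤ N−1: E(n+1) + T(n+1) + S(n+1) ≤ E(n) + S(n) + (1/(2N))·max_{0 ≤ m ≤ N} S(m) + G(n+1). Then E(N) + ∑_{n=1}^{N} T(n) + S(N) ≤ 2·∑_{n=1}^{N} G(n). -/
/-- Abstract telescoping/summation lemma yielding the global error bound of
Theorem 4.1: summing the per-step estimate (with `δ = 1/(2N)`) over `n`,
absorbing the maximum of `S`, gives `E N + ∑ T + S N ≤ 2 ∑ G`. -/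
theorem stmt7 (N : ℕ) (hN : 1 ≤ N) (E T S G : ℕ → ℝ)
    (hE : ∀ n, 0 ≤ E n) (hT : ∀ n, 0 ≤ T n) (hS : ∀ n, 0 ≤ S n) (hG : ∀ n, 0 ≤ G n)
    (hE0 : E 0 = 0) (hS0 : S 0 = 0)
    (hstep : ∀ n, n < N →
      E (n + 1) + T (n + 1) + S (n + 1) ≤
        E n + S n
          + (1 / (2 * (N : ℝ))) *
            ((Finset.range (N + 1)).sup' (Finset.nonempty_range_iff.mpr (Nat.succ_ne_zero N)) S)
          + G (n + 1)) :
    E N + (∑ n ∈ Finset.Icc 1 N, T n) + S N ≤ 2 * ∑ n ∈ Finset.Icc 1 N, G n := by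
  set M : ℝ := (Finset.range (N + 1)).sup' (Finset.nonempty_range_iff.mpr (Nat.succ_ne_zero N)) S
    with hM
  have hNpos : (0:ℝ) < N := by exact_mod_cast hN
  have hM0 : 0 ≤ M := le_trans (hS 0)
    (Finset.le_sup' S (Finset.mem_range.mpr (Nat.succ_pos N)))
  -- key induction
  have key : ∀ k, k ≤ N →
      E k + (∑ n ∈ Finset.Icc 1 k, T n) + S k ≤
        (k : ℝ) * (1 / (2 * (N : ℝ))) * M + ∑ n ∈ Finset.Icc 1 k, G n := by
    intro k
    induction k with
    | zero => intro _; simp [hE0, hS0]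
    | succ k ih =>
      intro hk
      have hkN : k < N := hk
      have ihk := ih (le_of_lt hkN)
      have hstepk := hstep k hkN
      have hsumT : ∑ n ∈ Finset.Icc 1 (k+1), T n
          = (∑ n ∈ Finset.Icc 1 k, T n) + T (k+1) :=
        Finset.sum_Icc_succ_top (Nat.one_le_iff_ne_zero.mpr (Nat.succ_ne_zero k)) T
      have hsumG : ∑ n ∈ Finset.Icc 1 (k+1), G n
          = (∑ n ∈ Finset.Icc 1 k, G n) + G (k+1) :=
        Finset.sum_Icc_succ_top (Nat.one_le_iff_ne_zero.mpr (Nat.succ_ne_zero k)) G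
      rw [hsumT, hsumG]
      push_cast
      nlinarith [hM0, hNpos]
  obtain ⟨m, hm, hmeq⟩ := Finset.exists_mem_eq_sup' (Finset.nonempty_range_iff.mpr (Nat.succ_ne_zero N)) S
  have hmN : m ≤ N := Nat.lt_succ_iff.mp (Finset.mem_range.mp hm)
  have hMm : M = S m := hmeq
  have hGmono : ∑ n ∈ Finset.Icc 1 m, G n ≤ ∑ n ∈ Finset.Icc 1 N, G n :=
    Finset.sum_le_sum_of_subset_of_nonneg
      (Finset.Icc_subset_Icc_right hmN) (fun i _ _ => hG i)
  have hfrac : (m : ℝ) * (1 / (2 * (N : ℝ))) * M ≤ M / 2 := by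
    have hmN' : (m : ℝ) ≤ N := by exact_mod_cast hmN
    have h : (m : ℝ) * (1 / (2 * (N : ℝ))) ≤ 1 / 2 := by
      rw [mul_one_div, div_le_div_iff₀ (by positivity) (by norm_num)]
      nlinarith
    nlinarith [mul_le_mul_of_nonneg_right h hM0]
  have hMle : M ≤ 2 * ∑ n ∈ Finset.Icc 1 N, G n := by
    have h1 := key m hmN
    have h2 : S m ≤ (m : ℝ) * (1 / (2 * (N : ℝ))) * M + ∑ n ∈ Finset.Icc 1 m, G n := by
      nlinarith [hE m, Finset.sum_nonneg (fun i (_ : i ∈ Finset.Icc 1 m) => hT i)]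
    nlinarith
  have hfinal := key N le_rfl
  have hfracN : (N : ℝ) * (1 / (2 * (N : ℝ))) * M = M / 2 := by
    field_simp
  nlinarith
end

section
/- Let H be a real inner product space, let L > 0, and let u, ξ, F, S, u', ξ', F', S' ∈ H satisfy the two Robin relations L·u' + F' = (L/2)(u + ξ) + (1/2)(F + S) and L·ξ' − S' = (L/2)(u + ξ) − (1/2)(F + S). Then the following exact identity holds: L·⟨u' − (u+ξ)/2, u'⟩ + L·⟨ξ' − (u+ξ)/2, ξ'⟩ − (1/2)·⟨F + S, u' − ξ'⟩ = (L/2)·(‖u'‖² + ‖ξ'‖²) − (L/4)·‖u + ξ‖² + (1/(2L))·(‖F'‖² + ‖S'‖²) − (1/(4L))·‖F + S‖². -/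
open scoped RealInnerProductSpace

/-- Exact interface identity in the stability analysis (Theorem 4.2) of the explicit
Robin–Robin scheme with common coupling parameter `L = L₁ = L₂`. -/
theorem stmt8 {H : Type*} [NormedAddCommGroup H] [InnerProductSpace ℝ H]
    (L : ℝ) (hL : 0 < L)
    (u ξ F S u' ξ' F' S' : H)
    (h1 : L • u' + F' = (L / 2) • (u + ξ) + ((1 : ℝ) / 2) • (F + S))
    (h2 : L • ξ' - S' = (L / 2) • (u + ξ) - ((1 : ℝ) / 2) • (F + S)) :
    L * ⟪u' - ((1 : ℝ) / 2) • (u + ξ), u'⟫ + L * ⟪ξ' - ((1 : ℝ) / 2) • (u + ξ), ξ'⟫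
      - (1 / 2) * ⟪F + S, u' - ξ'⟫ =
      (L / 2) * (‖u'‖ ^ 2 + ‖ξ'‖ ^ 2) - (L / 4) * ‖u + ξ‖ ^ 2
        + (1 / (2 * L)) * (‖F'‖ ^ 2 + ‖S'‖ ^ 2) - (1 / (4 * L)) * ‖F + S‖ ^ 2 := by
  have hF' : F' = (L / 2) • (u + ξ) + ((1 : ℝ) / 2) • (F + S) - L • u' := by
    rw [← h1]; abel
  have hS' : S' = L • ξ' - ((L / 2) • (u + ξ) - ((1 : ℝ) / 2) • (F + S)) := by
    rw [← h2]; abel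
  subst hF' hS'
  simp only [← real_inner_self_eq_norm_sq, inner_sub_left, inner_sub_right,
    inner_add_left, inner_add_right, inner_smul_left, inner_smul_right,
    RCLike.ofReal_real_eq_id, id_eq]
  simp only [starRingEnd_apply, star_trivial,
    real_inner_comm ξ u, real_inner_comm S F,
    real_inner_comm u' u, real_inner_comm u' ξ, real_inner_comm u' F, real_inner_comm u' S,
    real_inner_comm ξ' u, real_inner_comm ξ' ξ, real_inner_comm ξ' F, real_inner_comm ξ' S,
    real_inner_comm ξ' u']
  field_simp
  ring
end

section
/- Let H be a real inner product space, let L > 0, and let u, ξ, F, S, u', ξ', F', S' ∈ H satisfy the two Robin relations L·u' + F' = (L/2)(u + ξ) + (1/2)(F + S) and L·ξ' − S' = (L/2)(u + ξ) − (1/2)(F + S). Then L·⟨u' − (u+ξ)/2, u'⟩ + L·⟨ξ' − (u+ξ)/2, ξ'⟩ − (1/2)·⟨F + S, u' − ξ'⟩ ≥ (L/2)·(‖u'‖² + ‖ξ'‖² − ‖u‖² − ‖ξ‖²) + (1/(2L))·(‖F'‖² + ‖S'‖² − ‖F‖² − ‖S‖²). -/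
open scoped RealInnerProductSpace

/-- Core per-time-step interface estimate proving unconditional stability (Theorem 4.2)
of the explicit Robin–Robin scheme when `L₁ = L₂ = L`: the interface terms dominate the
increment of the interface energy `I = (L/2)(‖u‖² + ‖ξ‖²) + (1/(2L))(‖F‖² + ‖S‖²)`. -/
theorem stmt9 {H : Type*} [NormedAddCommGroup H] [InnerProductSpace ℝ H]
    (L : ℝ) (hL : 0 < L)
    (u ξ F S u' ξ' F' S' : H)
    (h1 : L • u' + F' = (L / 2) • (u + ξ) + ((1 : ℝ) / 2) • (F + S))
    (h2 : L • ξ' - S' = (L / 2) • (u + ξ) - ((1 : ℝ) / 2) • (F + S)) :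
    (L / 2) * (‖u'‖ ^ 2 + ‖ξ'‖ ^ 2 - ‖u‖ ^ 2 - ‖ξ‖ ^ 2)
      + (1 / (2 * L)) * (‖F'‖ ^ 2 + ‖S'‖ ^ 2 - ‖F‖ ^ 2 - ‖S‖ ^ 2) ≤
    L * ⟪u' - ((1 : ℝ) / 2) • (u + ξ), u'⟫ + L * ⟪ξ' - ((1 : ℝ) / 2) • (u + ξ), ξ'⟫
      - (1 / 2) * ⟪F + S, u' - ξ'⟫ := by
  have hF' : F' = (L / 2) • (u + ξ) + ((1 : ℝ) / 2) • (F + S) - L • u' := by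
    rw [← h1]; abel
  have hS' : S' = L • ξ' - ((L / 2) • (u + ξ) - ((1 : ℝ) / 2) • (F + S)) := by
    rw [← h2]; abel
  subst hF' hS'
  have key :
      (L * ⟪u' - ((1 : ℝ) / 2) • (u + ξ), u'⟫ + L * ⟪ξ' - ((1 : ℝ) / 2) • (u + ξ), ξ'⟫
        - (1 / 2) * ⟪F + S, u' - ξ'⟫)
      - ((L / 2) * (‖u'‖ ^ 2 + ‖ξ'‖ ^ 2 - ‖u‖ ^ 2 - ‖ξ‖ ^ 2)
        + (1 / (2 * L)) * (‖(L / 2) • (u + ξ) + ((1 : ℝ) / 2) • (F + S) - L • u'‖ ^ 2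
          + ‖L • ξ' - ((L / 2) • (u + ξ) - ((1 : ℝ) / 2) • (F + S))‖ ^ 2 - ‖F‖ ^ 2 - ‖S‖ ^ 2))
      = (L / 4) * ⟪u - ξ, u - ξ⟫ + (1 / (4 * L)) * ⟪F - S, F - S⟫ := by
    simp only [← real_inner_self_eq_norm_sq, inner_add_left, inner_add_right,
      inner_sub_left, inner_sub_right, real_inner_smul_left, real_inner_smul_right,
      real_inner_comm u' u, real_inner_comm u' ξ, real_inner_comm ξ' u,
      real_inner_comm ξ' ξ, real_inner_comm ξ u, real_inner_comm S F,
      real_inner_comm F u', real_inner_comm S u', real_inner_comm F ξ',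
      real_inner_comm S ξ', real_inner_comm F u, real_inner_comm S u,
      real_inner_comm F ξ, real_inner_comm S ξ, real_inner_comm ξ' u']
    field_simp
    ring
  have h3 : (0 : ℝ) ≤ ⟪u - ξ, u - ξ⟫ := real_inner_self_nonneg
  have h4 : (0 : ℝ) ≤ ⟪F - S, F - S⟫ := real_inner_self_nonneg
  nlinarith [mul_nonneg (by positivity : (0:ℝ) ≤ L / 4) h3,
    mul_nonneg (by positivity : (0:ℝ) ≤ 1 / (4 * L)) h4]
end

section
/- Let H be a real inner product space, let L > 0 and N ≥ 1, and let (uₙ), (ξₙ), (Fₙ), (Sₙ) be H-valued sequences satisfying, for every n with 0 ≤ n ≤ N−1, the Robin recursions L·u_{n+1} + F_{n+1} = (L/2)(uₙ + ξₙ) + (1/2)(Fₙ + Sₙ) and L·ξ_{n+1} − S_{n+1} = (L/2)(uₙ + ξₙ) − (1/2)(Fₙ + Sₙ). Define Iₙ = (L/2)(‖uₙ‖² + ‖ξₙ‖²) + (1/(2L))(‖Fₙ‖² + ‖Sₙ‖²). Then ∑_{n=0}^{N−1} [ L·⟨u_{n+1} − (uₙ+ξₙ)/2, u_{n+1}⟩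 + L·⟨ξ_{n+1} − (uₙ+ξₙ)/2, ξ_{n+1}⟩ − (1/2)·⟨Fₙ + Sₙ, u_{n+1} − ξ_{n+1}⟩ ] ≥ I_N − I₀. -/
open scoped RealInnerProductSpace

/-! The Robin conditions give `F' = g - L (u' - m)` and `S' = g + L (ξ' - m)`, where `m` and `g`
are the averages of the old velocities and stresses. Expanding `‖F'‖² + ‖S'‖²` with these and
completing squares (`‖u'‖² - 2⟪u' - m, u'⟫ + ‖u' - m‖² = ‖m‖²`), each step obeys an exact
energy identity: the increase of `I` plus the numerical dissipation
`(L/4)‖u - ξ‖² + (1/(4L))‖F - S‖²` equals the interface term, by the parallelogram law.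
Dropping the dissipation and telescoping gives the estimate. -/

section RobinStep

variable {H : Type*} [NormedAddCommGroup H] [InnerProductSpace ℝ H]

theorem four_mul_norm_half_smul_add_sq (x y : H) :
    4 * ‖((1 : ℝ) / 2) • (x + y)‖ ^ 2 = 2 * (‖x‖ ^ 2 + ‖y‖ ^ 2) - ‖x - y‖ ^ 2 := by
  rw [norm_smul, mul_pow]
  norm_num
  linear_combination parallelogram_law_with_norm ℝ x y

noncomputable def interfaceEnergy (L : ℝ) (u ξ F S : H) : ℝ :=
  (L / 2) * (‖u‖ ^ 2 + ‖ξ‖ ^ 2) + (1 / (2 * L)) * (‖F‖ ^ 2 + ‖S‖ ^ 2)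

variable {L : ℝ} {u ξ F S u' ξ' F' S' : H}

theorem interfaceEnergy_sub_add_dissipation (hL : L ≠ 0)
    (hF : L • u' + F' = (L / 2) • (u + ξ) + ((1 : ℝ) / 2) • (F + S))
    (hS : L • ξ' - S' = (L / 2) • (u + ξ) - ((1 : ℝ) / 2) • (F + S)) :
    interfaceEnergy L u' ξ' F' S' - interfaceEnergy L u ξ F S
        + ((L / 4) * ‖u - ξ‖ ^ 2 + (1 / (4 * L)) * ‖F - S‖ ^ 2) =
      L * ⟪u' - ((1 : ℝ) / 2) • (u + ξ), u'⟫
        + L * ⟪ξ' - ((1 : ℝ) / 2) • (u + ξ), ξ'⟫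
        - (1 / 2) * ⟪F + S, u' - ξ'⟫ := by
  have hm := four_mul_norm_half_smul_add_sq u ξ
  have hg := four_mul_norm_half_smul_add_sq F S
  set m := ((1 : ℝ) / 2) • (u + ξ) with hm_def
  set g := ((1 : ℝ) / 2) • (F + S) with hg_def
  clear_value m g
  have hF' : F' = g - L • (u' - m) := by
    linear_combination (norm := module) hF - L • hm_def
  have hS' : S' = g + L • (ξ' - m) := by
    linear_combination (norm := module) -hS + L • hm_def
  have hF'sq : ‖F'‖ ^ 2 = ‖g‖ ^ 2 - 2 * L * ⟪g, u' - m⟫ + L ^ 2 * ‖u' - m‖ ^ 2 := by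
    rw [hF', norm_sub_sq_real, real_inner_smul_right, norm_smul, mul_pow, Real.norm_eq_abs, sq_abs]
    ring
  have hS'sq : ‖S'‖ ^ 2 = ‖g‖ ^ 2 + 2 * L * ⟪g, ξ' - m⟫ + L ^ 2 * ‖ξ' - m‖ ^ 2 := by
    rw [hS', norm_add_sq_real, real_inner_smul_right, norm_smul, mul_pow, Real.norm_eq_abs, sq_abs]
    ring
  have hu' : ‖m‖ ^ 2 = ‖u'‖ ^ 2 - 2 * ⟪u' - m, u'⟫ + ‖u' - m‖ ^ 2 := by
    rw [← real_inner_comm, ← norm_sub_sq_real, sub_sub_cancel]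
  have hξ' : ‖m‖ ^ 2 = ‖ξ'‖ ^ 2 - 2 * ⟪ξ' - m, ξ'⟫ + ‖ξ' - m‖ ^ 2 := by
    rw [← real_inner_comm, ← norm_sub_sq_real, sub_sub_cancel]
  have hwork : ⟪F + S, u' - ξ'⟫ = 2 * (⟪g, u' - m⟫ - ⟪g, ξ' - m⟫) := by
    rw [← inner_sub_right, sub_sub_sub_cancel_right, hg_def, real_inner_smul_left]
    ring
  unfold interfaceEnergy
  rw [hF'sq, hS'sq, hwork]
  linear_combination (norm := (field_simp; ring))
    -(L / 2) * hu' - (L / 2) * hξ' + (L / 4) * hm + (1 / (4 * L)) * hg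

theorem interfaceEnergy_sub_le (hL : 0 < L)
    (hF : L • u' + F' = (L / 2) • (u + ξ) + ((1 : ℝ) / 2) • (F + S))
    (hS : L • ξ' - S' = (L / 2) • (u + ξ) - ((1 : ℝ) / 2) • (F + S)) :
    interfaceEnergy L u' ξ' F' S' - interfaceEnergy L u ξ F S ≤
      L * ⟪u' - ((1 : ℝ) / 2) • (u + ξ), u'⟫
        + L * ⟪ξ' - ((1 : ℝ) / 2) • (u + ξ), ξ'⟫
        - (1 / 2) * ⟪F + S, u' - ξ'⟫ := by
  rw [← interfaceEnergy_sub_add_dissipation hL.ne' hF hS, le_add_iff_nonneg_right]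
  positivity

end RobinStep

theorem stmt10_general {H : Type*} [NormedAddCommGroup H] [InnerProductSpace ℝ H]
    (L : ℝ) (hL : 0 < L) (N : ℕ)
    (u ξ F S : ℕ → H)
    (h1 : ∀ n, n < N →
      L • u (n + 1) + F (n + 1) =
        (L / 2) • (u n + ξ n) + ((1 : ℝ) / 2) • (F n + S n))
    (h2 : ∀ n, n < N →
      L • ξ (n + 1) - S (n + 1) =
        (L / 2) • (u n + ξ n) - ((1 : ℝ) / 2) • (F n + S n))
    (I : ℕ → ℝ)
    (hI : ∀ n, I n = (L / 2) * (‖u n‖ ^ 2 + ‖ξ n‖ ^ 2)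
        + (1 / (2 * L)) * (‖F n‖ ^ 2 + ‖S n‖ ^ 2)) :
    I N - I 0 ≤
      ∑ n ∈ Finset.range N,
        (L * ⟪u (n + 1) - ((1 : ℝ) / 2) • (u n + ξ n), u (n + 1)⟫
          + L * ⟪ξ (n + 1) - ((1 : ℝ) / 2) • (u n + ξ n), ξ (n + 1)⟫
          - (1 / 2) * ⟪F n + S n, u (n + 1) - ξ (n + 1)⟫) := by
  have hI' : I = fun n ↦ interfaceEnergy L (u n) (ξ n) (F n) (S n) := funext hI
  rw [← Finset.sum_range_sub I N]
  refine Finset.sum_le_sum fun n hn ↦ ?_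
  rw [Finset.mem_range] at hn
  rw [hI']
  exact interfaceEnergy_sub_le hL (h1 n hn) (h2 n hn)

/-- Telescoped interface estimate yielding unconditional stability (Theorem 4.2):
summing the per-step interface inequality over `n` shows the accumulated interface
terms control the total growth of the interface energy `I`. -/
theorem stmt10 {H : Type*} [NormedAddCommGroup H] [InnerProductSpace ℝ H]
    (L : ℝ) (hL : 0 < L) (N : ℕ) (hN : 1 ≤ N)
    (u ξ F S : ℕ → H)
    (h1 : ∀ n, n < N →
      L • u (n + 1) + F (n + 1) =
        (L / 2) • (u n + ξ n) + ((1 : ℝ) / 2) • (F n + S n))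
    (h2 : ∀ n, n < N →
      L • ξ (n + 1) - S (n + 1) =
        (L / 2) • (u n + ξ n) - ((1 : ℝ) / 2) • (F n + S n))
    (I : ℕ → ℝ)
    (hI : ∀ n, I n = (L / 2) * (‖u n‖ ^ 2 + ‖ξ n‖ ^ 2)
        + (1 / (2 * L)) * (‖F n‖ ^ 2 + ‖S n‖ ^ 2)) :
    I N - I 0 ≤
      ∑ n ∈ Finset.range N,
        (L * ⟪u (n + 1) - ((1 : ℝ) / 2) • (u n + ξ n), u (n + 1)⟫
          + L * ⟪ξ (n + 1) - ((1 : ℝ) / 2) • (u n + ξ n), ξ (n + 1)⟫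
          - (1 / 2) * ⟪F n + S n, u (n + 1) - ξ (n + 1)⟫) :=
  stmt10_general L hL N u ξ F S h1 h2 I hI
end

section
/- Let H be a real inner product space, let L > 0, and let u, ξ, F, S, u', ξ', F', S' ∈ H satisfy the two Robin relations L·u' + F' = (L/2)(u + ξ) + (1/2)(F + S) and L·ξ' − S' = (L/2)(u + ξ) − (1/2)(F + S). Then (1/2)·⟨F + S, u' − ξ'⟩ ≤ (1/(2L))·(‖F‖² + ‖S‖²) − (1/(2L))·(‖F'‖² + ‖S'‖²) + (L/2)·‖u' − (u+ξ)/2‖² + (L/2)·‖ξ' − (u+ξ)/2‖². -/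
open scoped RealInnerProductSpace

/-- Combined right-hand-side interface estimate (equations (4.25)–(4.30)) in the
stability proof of Theorem 4.2, valid precisely because `L₁ = L₂ = L`. -/
theorem stmt12 {H : Type*} [NormedAddCommGroup H] [InnerProductSpace ℝ H]
    (L : ℝ) (hL : 0 < L)
    (u ξ F S u' ξ' F' S' : H)
    (h1 : L • u' + F' = (L / 2) • (u + ξ) + ((1 : ℝ) / 2) • (F + S))
    (h2 : L • ξ' - S' = (L / 2) • (u + ξ) - ((1 : ℝ) / 2) • (F + S)) :
    (1 / 2) * ⟪F + S, u' - ξ'⟫ ≤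
      (1 / (2 * L)) * (‖F‖ ^ 2 + ‖S‖ ^ 2) - (1 / (2 * L)) * (‖F'‖ ^ 2 + ‖S'‖ ^ 2)
        + (L / 2) * ‖u' - ((1 : ℝ) / 2) • (u + ξ)‖ ^ 2
        + (L / 2) * ‖ξ' - ((1 : ℝ) / 2) • (u + ξ)‖ ^ 2 := by
  have hLne : L ≠ 0 := ne_of_gt hL
  have hu : L • u' = (L / 2) • (u + ξ) + ((1 : ℝ) / 2) • (F + S) - F' := by
    rw [← h1]; abel
  have hξ : L • ξ' = (L / 2) • (u + ξ) - ((1 : ℝ) / 2) • (F + S) + S' := by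
    rw [← h2]; abel
  have e1 : u' - ξ' = L⁻¹ • (F + S - F' - S') := by
    rw [eq_inv_smul_iff₀ hLne, smul_sub, hu, hξ]; module
  have e2 : u' - ((1 : ℝ) / 2) • (u + ξ) = L⁻¹ • (((1 : ℝ) / 2) • (F + S) - F') := by
    rw [eq_inv_smul_iff₀ hLne, smul_sub, hu]; module
  have e3 : ξ' - ((1 : ℝ) / 2) • (u + ξ) = L⁻¹ • (S' - ((1 : ℝ) / 2) • (F + S)) := by
    rw [eq_inv_smul_iff₀ hLne, smul_sub, hξ]; module
  rw [e1, e2, e3]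
  have habs : ‖L⁻¹‖ = L⁻¹ := abs_of_pos (inv_pos.2 hL)
  rw [real_inner_smul_right, norm_smul, norm_smul, habs]
  have hFF : ‖F‖ ^ 2 = ⟪F, F⟫ := (real_inner_self_eq_norm_sq F).symm
  have hSS : ‖S‖ ^ 2 = ⟪S, S⟫ := (real_inner_self_eq_norm_sq S).symm
  have hFF' : ‖F'‖ ^ 2 = ⟪F', F'⟫ := (real_inner_self_eq_norm_sq F').symm
  have hSS' : ‖S'‖ ^ 2 = ⟪S', S'⟫ := (real_inner_self_eq_norm_sq S').symm
  have hn2 : ‖((1 : ℝ) / 2) • (F + S) - F'‖ ^ 2 = ⟪((1:ℝ)/2) • (F + S) - F', ((1:ℝ)/2) • (F + S) - F'⟫ :=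
    (real_inner_self_eq_norm_sq _).symm
  have hn3 : ‖S' - ((1 : ℝ) / 2) • (F + S)‖ ^ 2 = ⟪S' - ((1:ℝ)/2) • (F + S), S' - ((1:ℝ)/2) • (F + S)⟫ :=
    (real_inner_self_eq_norm_sq _).symm
  have key : 2 * ⟪F, S⟫ ≤ ⟪F, F⟫ + ⟪S, S⟫ := by
    have h : (0:ℝ) ≤ ⟪F - S, F - S⟫ := real_inner_self_nonneg
    simp only [inner_sub_left, inner_sub_right, real_inner_comm F S] at h
    linarith
  have hgoal : ⟪F + S, F + S - F' - S'⟫ ≤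
      (‖F‖ ^ 2 + ‖S‖ ^ 2) - (‖F'‖ ^ 2 + ‖S'‖ ^ 2)
        + ‖((1 : ℝ) / 2) • (F + S) - F'‖ ^ 2 + ‖S' - ((1 : ℝ) / 2) • (F + S)‖ ^ 2 := by
    rw [hFF, hSS, hFF', hSS', hn2, hn3]
    simp only [inner_sub_left, inner_sub_right, inner_add_left, inner_add_right,
      real_inner_smul_left, real_inner_smul_right,
      real_inner_comm S F, real_inner_comm F' F, real_inner_comm F' S,
      real_inner_comm S' F, real_inner_comm S' S]
    linarith [key, real_inner_comm S F]
  have hpos : (0:ℝ) ≤ 1 / (2 * L) := by positivity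
  calc 1 / 2 * (L⁻¹ * ⟪F + S, F + S - F' - S'⟫)
      = 1 / (2 * L) * ⟪F + S, F + S - F' - S'⟫ := by
        field_simp
        try ring
    _ ≤ 1 / (2 * L) * ((‖F‖ ^ 2 + ‖S‖ ^ 2) - (‖F'‖ ^ 2 + ‖S'‖ ^ 2)
        + ‖((1 : ℝ) / 2) • (F + S) - F'‖ ^ 2 + ‖S' - ((1 : ℝ) / 2) • (F + S)‖ ^ 2) :=
        mul_le_mul_of_nonneg_left hgoal hpos
    _ = 1 / (2 * L) * (‖F‖ ^ 2 + ‖S‖ ^ 2) - 1 / (2 * L) * (‖F'‖ ^ 2 + ‖S'‖ ^ 2)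
        + L / 2 * (L⁻¹ * ‖((1 : ℝ) / 2) • (F + S) - F'‖) ^ 2
        + L / 2 * (L⁻¹ * ‖S' - ((1 : ℝ) / 2) • (F + S)‖) ^ 2 := by
        field_simp
end

section
/- Let E be a real Banach space, let Δt > 0, t₀ ≤ t₁, M ≥ 0, and let y : ℝ → E be continuously differentiable with y(t₀) = 0. Suppose that for all t ∈ [t₀, t₁], ‖Δt·y'(t) + y(t)‖ ≤ M. Then ‖y(t)‖ ≤ M for all t ∈ [t₀, t₁]. -/
/-!
Multiplying by the integrating factor `e^{t/τ}` turns `τ y' + y` into `τ (e^{t/τ} y)'`, so a bound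
`‖τ y' + y‖ ≤ M` bounds the growth of `e^{t/τ} y` by that of `M e^{t/τ}`. Dividing back by `e^{t/τ}`
shows that `‖y t‖` is at most a convex combination of `‖y a‖` and `M`.
-/

open Set Real

section

variable {E : Type*} [NormedAddCommGroup E] [NormedSpace ℝ E]

theorem hasDerivWithinAt_exp_div_smul {y : ℝ → E} {v : E} {s : Set ℝ} {τ t : ℝ} (hτ : τ ≠ 0)
    (hy : HasDerivWithinAt y v s t) :
    HasDerivWithinAt (fun t => exp (t / τ) • y t) ((exp (t / τ) / τ) • (τ • v + y t)) s t := by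
  have hexp : HasDerivWithinAt (fun t => exp (t / τ)) (exp (t / τ) * τ⁻¹) s t :=
    ((hasDerivWithinAt_id t s).div_const τ).exp.congr_deriv (by simp)
  refine (hexp.smul hy).congr_deriv ?_
  rw [smul_add, smul_smul, div_mul_cancel₀ _ hτ, ← div_eq_mul_inv]

theorem norm_le_of_norm_smul_deriv_add_le {y y' : ℝ → E} {τ a b M : ℝ} (hτ : 0 < τ)
    (hcont : ContinuousOn y (Icc a b))
    (hderiv : ∀ t ∈ Ico a b, HasDerivWithinAt y (y' t) (Ici t) t)
    (hbound : ∀ t ∈ Ico a b, ‖τ • y' t + y t‖ ≤ M) {t : ℝ} (ht : t ∈ Icc a b) :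
    ‖y t‖ ≤ exp ((a - t) / τ) * ‖y a‖ + M * (1 - exp ((a - t) / τ)) := by
  have hweighted : ‖exp (t / τ) • y t‖
      ≤ exp (a / τ) * ‖y a‖ + M * (exp (t / τ) - exp (a / τ)) := by
    refine image_norm_le_of_norm_deriv_right_le_deriv_boundary
      (f := fun t => exp (t / τ) • y t) (f' := fun t => (exp (t / τ) / τ) • (τ • y' t + y t))
      (B := fun t => exp (a / τ) * ‖y a‖ + M * (exp (t / τ) - exp (a / τ)))
      (B' := fun t => M * (exp (t / τ) / τ))
      (((continuous_id.div_const τ).rexp.continuousOn).smul hcont)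
      (fun s hs => hasDerivWithinAt_exp_div_smul hτ.ne' (hderiv s hs)) ?_ ?_ ?_ ht
    · simp [norm_smul, abs_of_pos (exp_pos _)]
    · intro s
      refine ((((hasDerivAt_id' s).div_const τ).exp.sub_const _).const_mul M).const_add _
        |>.congr_deriv ?_
      rw [mul_one_div]
    · intro s hs
      rw [norm_smul, norm_of_nonneg (by positivity), mul_comm]
      exact mul_le_mul_of_nonneg_right (hbound s hs) (by positivity)
  have hsplit : exp ((a - t) / τ) = exp (a / τ) / exp (t / τ) := by
    rw [sub_div, exp_sub]
  rw [norm_smul, norm_of_nonneg (exp_pos _).le] at hweighted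
  have hrhs : exp (a / τ) / exp (t / τ) * ‖y a‖ + M * (1 - exp (a / τ) / exp (t / τ))
      = (exp (a / τ) * ‖y a‖ + M * (exp (t / τ) - exp (a / τ))) / exp (t / τ) := by
    field_simp
  rw [hsplit, hrhs, le_div_iff₀' (exp_pos _)]
  exact hweighted

end

theorem stmt14_general {E : Type*} [NormedAddCommGroup E] [NormedSpace ℝ E]
    (Δt : ℝ) (hΔt : 0 < Δt) (t₀ t₁ : ℝ) (M : ℝ) (hM : 0 ≤ M)
    (y y' : ℝ → E) (hderiv : ∀ t, HasDerivAt y (y' t) t)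
    (hy0 : y t₀ = 0)
    (hbound : ∀ t ∈ Set.Icc t₀ t₁, ‖Δt • y' t + y t‖ ≤ M) :
    ∀ t ∈ Set.Icc t₀ t₁, ‖y t‖ ≤ M := by
  intro t ht
  have h := norm_le_of_norm_smul_deriv_add_le hΔt
    (fun s _ => (hderiv s).continuousAt.continuousWithinAt)
    (fun s _ => (hderiv s).hasDerivWithinAt) (fun s hs => hbound s (Ico_subset_Icc_self hs)) ht
  rw [hy0, norm_zero, mul_zero, zero_add] at h
  exact h.trans (mul_le_of_le_one_right hM (sub_le_self _ (exp_pos _).le))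

/-- Remark 4.3: if `y` is continuously differentiable with `y t₀ = 0` and
`‖Δt·y'(t) + y(t)‖ ≤ M` on `[t₀, t₁]`, then `‖y t‖ ≤ M` on `[t₀, t₁]`. -/
theorem stmt14 {E : Type*} [NormedAddCommGroup E] [NormedSpace ℝ E] [CompleteSpace E]
    (Δt : ℝ) (hΔt : 0 < Δt) (t₀ t₁ : ℝ) (ht : t₀ ≤ t₁) (M : ℝ) (hM : 0 ≤ M)
    (y y' : ℝ → E) (hderiv : ∀ t, HasDerivAt y (y' t) t) (hcont : Continuous y')
    (hy0 : y t₀ = 0)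
    (hbound : ∀ t ∈ Set.Icc t₀ t₁, ‖Δt • y' t + y t‖ ≤ M) :
    ∀ t ∈ Set.Icc t₀ t₁, ‖y t‖ ≤ M :=
  stmt14_general Δt hΔt t₀ t₁ M hM y y' hderiv hy0 hbound
end
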